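/- arXiv:2207.04305 — 6 statements merged into one kernel-verified Lean document; each statement's English description precedes it below -/
import Mathlib

section
/- Let A be a nonempty finite set and d : A → ℝ a family of real numbers. Then the function ν ↦ -ν · log( Σ_{π ∈ A} exp(-d(π)/ν) ) tends to min_{π ∈ A} d(π) as ν tends to 0 from the right (limit along ν → 0⁺). -/
/-!
Write `m = min d`. The sum `∑ exp (-d i / ν)` contains the term `exp (-m / ν)` and is at most
`#A` times it, so `-ν log ∑ exp (-d i / ν)` is squeezed between `m - ν log #A` and `m`.
-/

open Filter Topology

namespace Real

variable {ι : Type*} {s : Finset ι} {f : ι → ℝ}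

theorem le_log_sum_exp {i : ι} (hi : i ∈ s) : f i ≤ log (∑ j ∈ s, exp (f j)) := by
  rw [← log_exp (f i)]
  exact log_le_log (exp_pos _) (Finset.single_le_sum (fun j _ => (exp_pos (f j)).le) hi)

theorem log_sum_exp_le (hs : s.Nonempty) {M : ℝ} (hf : ∀ i ∈ s, f i ≤ M) :
    log (∑ i ∈ s, exp (f i)) ≤ M + log s.card :=
  calc log (∑ i ∈ s, exp (f i))
      ≤ log (s.card * exp M) := by
        refine log_le_log (Finset.sum_pos (fun i _ => exp_pos (f i)) hs) ?_
        simpa using Finset.sum_le_sum fun i hi => exp_le_exp.mpr (hf i hi)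
    _ = M + log s.card := by
        rw [log_mul (by simpa using hs.ne_empty) (exp_ne_zero M), log_exp, add_comm]

end Real

section SoftMin

open Real

variable {ι : Type*} (A : Finset ι) (d : ι → ℝ)

noncomputable def softMin (ν : ℝ) : ℝ := -ν * log (∑ i ∈ A, exp (-d i / ν))

theorem softMin_le_inf' (hA : A.Nonempty) {ν : ℝ} (hν : 0 < ν) :
    softMin A d ν ≤ A.inf' hA d := by
  obtain ⟨i₀, hi₀, hmin⟩ := A.exists_mem_eq_inf' hA d
  have hlog := le_log_sum_exp (f := fun i => -d i / ν) hi₀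
  rw [div_le_iff₀ hν] at hlog
  rw [softMin, hmin]
  linarith

theorem inf'_sub_mul_log_card_le_softMin (hA : A.Nonempty) {ν : ℝ} (hν : 0 < ν) :
    A.inf' hA d - ν * log A.card ≤ softMin A d ν := by
  have hlog := log_sum_exp_le hA (f := fun i => -d i / ν) (M := -A.inf' hA d / ν)
    fun i hi => div_le_div_of_nonneg_right (neg_le_neg (A.inf'_le d hi)) hν.le
  have hscaled := mul_le_mul_of_nonneg_left hlog hν.le
  rw [mul_add, mul_div_cancel₀ _ hν.ne'] at hscaled
  rw [softMin]
  linarith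

end SoftMin

theorem gak_tendsto_dtw {ι : Type*} (A : Finset ι) (hA : A.Nonempty) (d : ι → ℝ) :
    Filter.Tendsto (fun ν : ℝ => -ν * Real.log (∑ π ∈ A, Real.exp (-d π / ν)))
      (nhdsWithin 0 (Set.Ioi 0)) (nhds (A.inf' hA d)) := by
  change Tendsto (softMin A d) _ _
  have hlower : Tendsto (fun ν : ℝ => A.inf' hA d - ν * Real.log A.card) (𝓝[>] 0)
      (𝓝 (A.inf' hA d)) := by
    have : Continuous fun ν : ℝ => A.inf' hA d - ν * Real.log A.card := by fun_prop
    simpa using (this.tendsto 0).mono_left nhdsWithin_le_nhds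
  refine tendsto_of_tendsto_of_tendsto_of_le_of_le' hlower tendsto_const_nhds ?_ ?_ <;>
    filter_upwards [self_mem_nhdsWithin] with ν hν
  · exact inf'_sub_mul_log_card_le_softMin A d hA hν
  · exact softMin_le_inf' A d hA hν
end

section
/- Let E be a finite-dimensional real inner product space and f : E → ℝ a differentiable function whose gradient is L-Lipschitz (L > 0). Suppose f attains its infimum f* and let X* = {x ∈ E : f(x) = f*} be its nonempty set of global minimizers. If f satisfies the μ-PL condition with μ > 0, i.e., ‖∇f(x)‖² ≥ 2μ(f(x) - f*) for all x, then f satisfies the μ-error-bound condition: ‖∇f(x)‖ ≥ μ · dist(x, X*) for all x ∈ E. -/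
/-!
With `g = √(f - f*)`, the PL inequality says `‖∇g‖ ≥ √(μ/2)` wherever `g > 0`. For
`0 < c < √(μ/2)`, a minimiser `y` of `g + c‖· - x‖` (it exists because closed balls are compact)
satisfies `g y ≤ g z + c‖z - y‖` for all `z`, which forces `‖∇g y‖ ≤ c` unless `g y = 0`. Hence
`y ∈ X*` and `c · dist(x, X*) ≤ g x`. Letting `c → √(μ/2)` gives quadratic growth
`μ/2 · dist(x, X*)² ≤ f x - f*`, and PL once more gives `μ² dist(x, X*)² ≤ 2μ(f x - f*) ≤ ‖∇f x‖²`.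
-/

open Metric Set Filter Topology

theorem IsMinOn.hasDerivAt_nonneg_of_Ici {φ : ℝ → ℝ} {a d : ℝ} (h : IsMinOn φ (Ici a) a)
    (hφ : HasDerivAt φ d a) : 0 ≤ d := by
  have hone : (1 : ℝ) ∈ posTangentConeAt (Ici a) a :=
    mem_posTangentConeAt_of_segment_subset
      ((segment_subset_Icc (by simp)).trans Icc_subset_Ici_self)
  simpa using h.localize.hasFDerivWithinAt_nonneg hφ.hasFDerivAt.hasFDerivWithinAt hone

theorem Continuous.exists_forall_add_mul_norm_sub_le {E : Type*} [NormedAddCommGroup E]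
    [ProperSpace E] {g : E → ℝ} (hg : Continuous g) {b : ℝ}
    (hb : ∀ z, b ≤ g z) {c : ℝ} (hc : 0 < c) (x : E) :
    ∃ y, ∀ z, g y + c * ‖y - x‖ ≤ g z + c * ‖z - x‖ := by
  refine (hg.add (continuous_const.mul (continuous_sub_right x).norm)).exists_forall_le ?_
  refine tendsto_atTop_add_left_of_le _ b hb (Tendsto.const_mul_atTop hc ?_)
  refine tendsto_atTop_mono (fun z => norm_sub_norm_le z x) ?_
  exact tendsto_atTop_add_const_right _ _ tendsto_norm_cocompact_atTop

section NormedSpace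

variable {E : Type*} [NormedAddCommGroup E] [NormedSpace ℝ E] {g : E → ℝ}

theorem HasFDerivAt.norm_le_of_forall_le_add_mul_norm_sub {g' : StrongDual ℝ E} {y : E} {c : ℝ}
    (hg : HasFDerivAt g g' y) (hc : 0 ≤ c) (hmin : ∀ z, g y ≤ g z + c * ‖z - y‖) :
    ‖g'‖ ≤ c := by
  have hdir : ∀ v, -(c * ‖v‖) ≤ g' v := by
    intro v
    have hline : HasDerivAt (fun t : ℝ => g (y + t • v) + t * (c * ‖v‖)) (g' v + c * ‖v‖) 0 := by
      have hcurve : HasDerivAt (fun t : ℝ => y + t • v) v 0 := by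
        simpa using ((hasDerivAt_id (0 : ℝ)).smul_const v).const_add y
      have hg0 : HasFDerivAt g g' (y + (0 : ℝ) • v) := by simpa using hg
      exact (hg0.comp_hasDerivAt 0 hcurve).add (hasDerivAt_mul_const (c * ‖v‖))
    have hray : IsMinOn (fun t : ℝ => g (y + t • v) + t * (c * ‖v‖)) (Ici 0) 0 := by
      intro t (ht : 0 ≤ t)
      have := hmin (y + t • v)
      simp only [add_sub_cancel_left, norm_smul, Real.norm_of_nonneg ht] at this
      show (_ : ℝ) ≤ _
      simp only [zero_smul, add_zero, zero_mul]
      linarith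
    linarith [hray.hasDerivAt_nonneg_of_Ici hline]
  refine g'.opNorm_le_bound hc fun v => abs_le.mpr ⟨hdir v, ?_⟩
  simpa using hdir (-v)

theorem mul_infDist_le_of_le_norm_fderiv [ProperSpace E] (hg : Continuous g) (hg0 : ∀ z, 0 ≤ g z)
    (hd : ∀ y, 0 < g y → DifferentiableAt ℝ g y) {s : ℝ}
    (hs : ∀ y, 0 < g y → s ≤ ‖fderiv ℝ g y‖) (x : E) :
    s * infDist x {y | g y = 0} ≤ g x := by
  have hlt : ∀ c < s, 0 < c → c * infDist x {y | g y = 0} ≤ g x := by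
    intro c hcs hc
    obtain ⟨y, hy⟩ := hg.exists_forall_add_mul_norm_sub_le hg0 hc x
    have hzero : g y = 0 := by
      by_contra hne
      have hpos : 0 < g y := (hg0 y).lt_of_ne' hne
      have hmin : ∀ z, g y ≤ g z + c * ‖z - y‖ := fun z => by
        nlinarith [hy z, norm_sub_le_norm_sub_add_norm_sub z y x, norm_sub_rev y x]
      have := (hd y hpos).hasFDerivAt.norm_le_of_forall_le_add_mul_norm_sub hc.le hmin
      linarith [hs y hpos]
    calc c * infDist x {y | g y = 0} ≤ c * ‖y - x‖ := by
          rw [← dist_eq_norm, dist_comm]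
          exact mul_le_mul_of_nonneg_left (infDist_le_dist_of_mem hzero) hc.le
      _ ≤ g x := by simpa [hzero] using hy x
  refine le_of_tendsto (x := 𝓝[<] s) ((continuous_id.mul continuous_const).tendsto' _ _ rfl
    |>.mono_left nhdsWithin_le_nhds) ?_
  filter_upwards [self_mem_nhdsWithin] with c (hcs : c < s)
  rcases lt_or_ge 0 c with hc | hc
  · exact hlt c hcs hc
  · exact (mul_nonpos_of_nonpos_of_nonneg hc infDist_nonneg).trans (hg0 x)

end NormedSpace

theorem norm_gradient_eq_norm_fderiv {E : Type*} [NormedAddCommGroup E] [InnerProductSpace ℝ E]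
    [CompleteSpace E] (f : E → ℝ) (x : E) : ‖gradient f x‖ = ‖fderiv ℝ f x‖ :=
  (InnerProductSpace.toDual ℝ E).symm.norm_map _

theorem mul_infDist_sq_le_of_polyakLojasiewicz {E : Type*} [NormedAddCommGroup E]
    [InnerProductSpace ℝ E] [ProperSpace E] {f : E → ℝ} (hf : Differentiable ℝ f)
    {fstar : ℝ} (hlb : ∀ x, fstar ≤ f x) {μ : ℝ} (hμ : 0 < μ)
    (hPL : ∀ x, 2 * μ * (f x - fstar) ≤ ‖gradient f x‖ ^ 2) (x : E) :
    μ / 2 * infDist x {y | f y = fstar} ^ 2 ≤ f x - fstar := by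
  set g : E → ℝ := fun z => √(f z - fstar)
  have hzero : {y | g y = 0} = {y | f y = fstar} := by
    ext y
    show √(f y - fstar) = 0 ↔ f y = fstar
    rw [Real.sqrt_eq_zero', sub_nonpos, (hlb y).ge_iff_eq']
  have hderiv : ∀ y, 0 < g y →
      HasFDerivAt g ((1 / (2 * g y)) • fderiv ℝ f y) y := fun y hy =>
    ((hf y).hasFDerivAt.sub_const fstar).sqrt (Real.sqrt_pos.mp hy).ne'
  have hslope : ∀ y, 0 < g y → √(μ / 2) ≤ ‖fderiv ℝ g y‖ := by
    intro y hy
    have hsq : (√(μ / 2) * (2 * g y)) ^ 2 ≤ ‖fderiv ℝ f y‖ ^ 2 := by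
      rw [mul_pow, mul_pow, Real.sq_sqrt (by positivity), Real.sq_sqrt (Real.sqrt_pos.mp hy).le,
        ← norm_gradient_eq_norm_fderiv]
      linarith [hPL y]
    rw [(hderiv y hy).fderiv, norm_smul, Real.norm_of_nonneg (by positivity), one_div,
      ← div_eq_inv_mul, le_div_iff₀ (by positivity)]
    exact (pow_le_pow_iff_left₀ (by positivity) (norm_nonneg _) two_ne_zero).mp hsq
  have hbound := mul_infDist_le_of_le_norm_fderiv (g := g)
    (hf.continuous.sub continuous_const).sqrt (fun z => Real.sqrt_nonneg _)
    (fun y hy => (hderiv y hy).differentiableAt) hslope x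
  rw [hzero] at hbound
  have := pow_le_pow_left₀ (mul_nonneg (Real.sqrt_nonneg _) infDist_nonneg) hbound 2
  rwa [mul_pow, Real.sq_sqrt (by positivity), Real.sq_sqrt (by linarith [hlb x])] at this

theorem pl_implies_error_bound_general {E : Type*} [NormedAddCommGroup E]
    [InnerProductSpace ℝ E] [FiniteDimensional ℝ E]
    (f : E → ℝ) (hf : Differentiable ℝ f)
    (fstar : ℝ) (hlb : ∀ x, fstar ≤ f x)
    (μ : ℝ) (hμ : 0 < μ)
    (hPL : ∀ x, 2 * μ * (f x - fstar) ≤ ‖gradient f x‖ ^ 2) :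
    ∀ x, μ * Metric.infDist x {y | f y = fstar} ≤ ‖gradient f x‖ := by
  intro x
  have hgrowth := mul_infDist_sq_le_of_polyakLojasiewicz hf hlb hμ hPL x
  have hsq : (μ * infDist x {y | f y = fstar}) ^ 2 ≤ ‖gradient f x‖ ^ 2 := by
    nlinarith [hPL x]
  exact (pow_le_pow_iff_left₀ (mul_nonneg hμ.le infDist_nonneg) (norm_nonneg _) two_ne_zero).mp hsq

theorem pl_implies_error_bound {E : Type*} [NormedAddCommGroup E]
    [InnerProductSpace ℝ E] [FiniteDimensional ℝ E]
    (f : E → ℝ) (hf : Differentiable ℝ f) (L : ℝ) (hL : 0 < L)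
    (hLip : ∀ x y, ‖gradient f x - gradient f y‖ ≤ L * ‖x - y‖)
    (fstar : ℝ) (hlb : ∀ x, fstar ≤ f x) (hatt : ∃ x, f x = fstar)
    (μ : ℝ) (hμ : 0 < μ)
    (hPL : ∀ x, 2 * μ * (f x - fstar) ≤ ‖gradient f x‖ ^ 2) :
    ∀ x, μ * Metric.infDist x {y | f y = fstar} ≤ ‖gradient f x‖ :=
  pl_implies_error_bound_general f hf fstar hlb μ hμ hPL
end

section
/- Let E be a finite-dimensional real inner product space and f : E → ℝ a differentiable function whose gradient is L-Lipschitz (L > 0). Suppose f attains its infimum f* and let X* = {x ∈ E : f(x) = f*} be its nonempty set of global minimizers. If f satisfies the μ-PL condition with μ > 0, then f satisfies μ-quadratic growth: f(x) - f* ≥ (μ/2) · dist(x, X*)² for all x ∈ E. -/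
/-!
The function `g = √(f - f*)` vanishes exactly on the minimizers, and the PL inequality says that
its slope is at least `√(μ/2)` wherever it is positive. Ekeland's variational principle (here by
compactness, in finite dimension) produces from any `x` a point `y` with `c ‖y - x‖ ≤ g x - g y`
at which the slope of `g` is at most `c`. For `c < √(μ/2)` this forces `g y = 0`, so
`c · dist(x, X*) ≤ g x`; letting `c → √(μ/2)` and squaring gives quadratic growth.
-/

open Metric Filter Topology

theorem Continuous.exists_ekeland_point {X : Type*} [MetricSpace X] [ProperSpace X] {g : X → ℝ}
    (hg : Continuous g) (hg0 : ∀ x, 0 ≤ g x) {c : ℝ} (hc : 0 < c) (x₀ : X) :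
    ∃ y, c * dist y x₀ ≤ g x₀ - g y ∧ ∀ z, g y ≤ g z + c * dist z y := by
  have hcoercive : ∀ᶠ z in cocompact X, g x₀ + c * dist x₀ x₀ ≤ g z + c * dist z x₀ := by
    filter_upwards [(tendsto_dist_left_cocompact_atTop x₀).eventually_ge_atTop (g x₀ / c)]
      with z hz
    rw [div_le_iff₀ hc] at hz
    nlinarith [hg0 z, dist_self x₀, dist_comm x₀ z]
  have hcont : Continuous fun z => g z + c * dist z x₀ := by fun_prop
  obtain ⟨y, hy⟩ := hcont.exists_forall_le' x₀ hcoercive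
  refine ⟨y, by simpa [le_sub_iff_add_le'] using hy x₀, fun z => ?_⟩
  nlinarith [hy z, dist_triangle z y x₀]

theorem HasFDerivAt.norm_le_of_forall_le_add_mul_norm {E : Type*} [NormedAddCommGroup E]
    [NormedSpace ℝ E] {g : E → ℝ} {g' : E →L[ℝ] ℝ} {y : E} {c : ℝ} (hg : HasFDerivAt g g' y)
    (hc : 0 ≤ c) (hmin : ∀ z, g y ≤ g z + c * ‖z - y‖) : ‖g'‖ ≤ c := by
  have hdir : ∀ v, -(c * ‖v‖) ≤ g' v := by
    intro v
    -- along the ray `t ↦ y + t • v`, `t ≥ 0`, the penalty `c ‖z - y‖` is linear in `t`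
    have hψ : HasDerivAt (fun t : ℝ => g (y + t • v) + t * (c * ‖v‖)) (g' v + c * ‖v‖) 0 := by
      have hline : HasDerivAt (fun t : ℝ => y + t • v) v 0 := by
        simpa using ((hasDerivAt_id (0 : ℝ)).smul_const v).const_add y
      have hg0 : HasFDerivAt g g' (y + (0 : ℝ) • v) := by simpa using hg
      exact (hg0.comp_hasDerivAt 0 hline).add (hasDerivAt_mul_const _)
    have hmin_ray :
        IsLocalMinOn (fun t : ℝ => g (y + t • v) + t * (c * ‖v‖)) (Set.Ici 0) 0 := by
      refine IsMinOn.localize fun t (ht : 0 ≤ t) => ?_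
      have := hmin (y + t • v)
      simp only [add_sub_cancel_left, norm_smul, Real.norm_of_nonneg ht] at this
      simp only [Set.mem_ofPred_eq, zero_smul, add_zero]
      linarith
    have hone : (1 : ℝ) ∈ posTangentConeAt (Set.Ici 0) 0 :=
      mem_posTangentConeAt_of_segment_subset (by simp [segment_eq_Icc, Set.Icc_subset_Ici_self])
    simpa [neg_le_iff_add_nonneg] using
      hmin_ray.hasFDerivWithinAt_nonneg hψ.hasFDerivAt.hasFDerivWithinAt hone
  refine g'.opNorm_le_bound hc fun v => abs_le.2 ⟨hdir v, ?_⟩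
  simpa [neg_le_neg_iff] using hdir (-v)

section ErrorBound

variable {E : Type*} [NormedAddCommGroup E] [NormedSpace ℝ E] [ProperSpace E] {g : E → ℝ}

theorem mul_infDist_zero_set_le_of_lt_norm_fderiv (hg : Continuous g) (hg0 : ∀ x, 0 ≤ g x)
    {c : ℝ} (hc : 0 < c)
    (hslope : ∀ y, 0 < g y → ∃ g' : E →L[ℝ] ℝ, HasFDerivAt g g' y ∧ c < ‖g'‖) (x : E) :
    c * infDist x {y | g y = 0} ≤ g x := by
  obtain ⟨y, hdecr, hmin⟩ := hg.exists_ekeland_point hg0 hc x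
  have hy : g y = 0 := by
    by_contra hne
    obtain ⟨g', hg', hlt⟩ := hslope y ((hg0 y).lt_of_ne' hne)
    have := hg'.norm_le_of_forall_le_add_mul_norm hc.le (by simpa [dist_eq_norm] using hmin)
    linarith
  calc c * infDist x {y | g y = 0} ≤ c * dist y x := by
        rw [dist_comm]; exact mul_le_mul_of_nonneg_left (infDist_le_dist_of_mem hy) hc.le
    _ ≤ g x := by linarith

theorem mul_infDist_zero_set_le_of_le_norm_fderiv (hg : Continuous g) (hg0 : ∀ x, 0 ≤ g x)
    {c : ℝ} (hslope : ∀ y, 0 < g y → ∃ g' : E →L[ℝ] ℝ, HasFDerivAt g g' y ∧ c ≤ ‖g'‖)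
    (x : E) :
    c * infDist x {y | g y = 0} ≤ g x := by
  rcases le_or_gt c 0 with hc | hc
  · exact (mul_nonpos_of_nonpos_of_nonneg hc infDist_nonneg).trans (hg0 x)
  refine le_of_tendsto (x := 𝓝[<] c)
    ((continuous_mul_const _).tendsto c |>.mono_left nhdsWithin_le_nhds) ?_
  filter_upwards [Ioo_mem_nhdsLT hc] with c' hc'
  refine mul_infDist_zero_set_le_of_lt_norm_fderiv hg hg0 hc'.1 (fun y hy => ?_) x
  obtain ⟨g', hg', hle⟩ := hslope y hy
  exact ⟨g', hg', hc'.2.trans_le hle⟩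

end ErrorBound

theorem sqrt_le_norm_fderiv_sqrt_sub_of_pl {E : Type*} [NormedAddCommGroup E] [NormedSpace ℝ E]
    {f : E → ℝ} {y : E} {fstar μ : ℝ} (hμ : 0 ≤ μ)
    (hy : fstar < f y) (hPL : 2 * μ * (f y - fstar) ≤ ‖fderiv ℝ f y‖ ^ 2) :
    √(μ / 2) ≤ ‖(1 / (2 * √(f y - fstar))) • fderiv ℝ f y‖ := by
  have hs : 0 < √(f y - fstar) := Real.sqrt_pos.2 (sub_pos.2 hy)
  rw [norm_smul, Real.norm_of_nonneg (by positivity), one_div, inv_mul_eq_div,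
    le_div_iff₀ (by positivity)]
  have hPL' : μ / 2 * (2 * √(f y - fstar)) ^ 2 ≤ ‖fderiv ℝ f y‖ ^ 2 := by
    rw [mul_pow, Real.sq_sqrt (sub_pos.2 hy).le]
    linarith
  simpa [Real.sqrt_mul (div_nonneg hμ zero_le_two), Real.sqrt_sq hs.le] using
    Real.sqrt_le_sqrt hPL'

theorem quadratic_growth_of_pl {E : Type*} [NormedAddCommGroup E] [NormedSpace ℝ E]
    [ProperSpace E] {f : E → ℝ} (hf : Differentiable ℝ f) {fstar μ : ℝ} (hμ : 0 ≤ μ)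
    (hlb : ∀ x, fstar ≤ f x) (hPL : ∀ x, 2 * μ * (f x - fstar) ≤ ‖fderiv ℝ f x‖ ^ 2) (x : E) :
    μ / 2 * infDist x {y | f y = fstar} ^ 2 ≤ f x - fstar := by
  have hzero : {y | √(f y - fstar) = 0} = {y | f y = fstar} := by
    ext y
    simp only [Set.mem_ofPred_eq, Real.sqrt_eq_zero', sub_nonpos]
    exact ⟨fun h => h.antisymm (hlb y), fun h => h.le⟩
  have hbound : √(μ / 2) * infDist x {y | √(f y - fstar) = 0} ≤ √(f x - fstar) := by
    refine mul_infDist_zero_set_le_of_le_norm_fderiv (hf.continuous.sub continuous_const).sqrt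
      (fun _ => Real.sqrt_nonneg _) (fun y hy => ?_) x
    have hpos : 0 < f y - fstar := Real.sqrt_pos.1 hy
    exact ⟨_, (hf y).hasFDerivAt.sub_const fstar |>.sqrt hpos.ne',
      sqrt_le_norm_fderiv_sqrt_sub_of_pl hμ (sub_pos.1 hpos) (hPL y)⟩
  have hlhs : 0 ≤ √(μ / 2) * infDist x {y | f y = fstar} :=
    mul_nonneg (Real.sqrt_nonneg _) infDist_nonneg
  rwa [hzero, Real.le_sqrt hlhs (sub_nonneg.2 (hlb x)), mul_pow,
    Real.sq_sqrt (div_nonneg hμ zero_le_two)] at hbound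

theorem pl_implies_quadratic_growth_general {E : Type*} [NormedAddCommGroup E]
    [InnerProductSpace ℝ E] [FiniteDimensional ℝ E]
    (f : E → ℝ) (hf : Differentiable ℝ f)
    (fstar : ℝ) (hlb : ∀ x, fstar ≤ f x)
    (μ : ℝ) (hμ : 0 < μ)
    (hPL : ∀ x, 2 * μ * (f x - fstar) ≤ ‖gradient f x‖ ^ 2) :
    ∀ x, μ / 2 * Metric.infDist x {y | f y = fstar} ^ 2 ≤ f x - fstar := by
  have hnorm : ∀ x, ‖gradient f x‖ = ‖fderiv ℝ f x‖ := fun x =>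
    (InnerProductSpace.toDual ℝ E).symm.norm_map _
  exact quadratic_growth_of_pl hf hμ.le hlb fun x => hnorm x ▸ hPL x

theorem pl_implies_quadratic_growth {E : Type*} [NormedAddCommGroup E]
    [InnerProductSpace ℝ E] [FiniteDimensional ℝ E]
    (f : E → ℝ) (hf : Differentiable ℝ f) (L : ℝ) (hL : 0 < L)
    (hLip : ∀ x y, ‖gradient f x - gradient f y‖ ≤ L * ‖x - y‖)
    (fstar : ℝ) (hlb : ∀ x, fstar ≤ f x) (hatt : ∃ x, f x = fstar)
    (μ : ℝ) (hμ : 0 < μ)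
    (hPL : ∀ x, 2 * μ * (f x - fstar) ≤ ‖gradient f x‖ ^ 2) :
    ∀ x, μ / 2 * Metric.infDist x {y | f y = fstar} ^ 2 ≤ f x - fstar :=
  pl_implies_quadratic_growth_general f hf fstar hlb μ hμ hPL
end

section
/- Let E be a finite-dimensional real inner product space and f : E → ℝ a differentiable function whose gradient is L-Lipschitz (L > 0). Suppose f attains its infimum f* and let X* = {x ∈ E : f(x) = f*} be its nonempty set of global minimizers. If f satisfies the μ-error-bound condition with μ > 0, i.e., ‖∇f(x)‖ ≥ μ · dist(x, X*) for all x, then f satisfies the (μ²/L)-PL condition: ‖∇f(x)‖² ≥ 2(μ²/L)(f(x) - f*) for all x ∈ E. -/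
open InnerProductSpace Set Metric

/-!
A nearest minimizer `y` of `x` is a critical point, so integrating the `L`-Lipschitz gradient
along the segment `[y, x]` gives the quadratic growth `f x - f* ≤ L/2 · dist(x, X*)²`.
Squaring the error bound gives `μ² dist(x, X*)² ≤ ‖∇f x‖²`, and the two combine.
-/

section Descent

variable {E : Type*} [NormedAddCommGroup E] [InnerProductSpace ℝ E] [CompleteSpace E] {f : E → ℝ}

theorem HasGradientAt.hasDerivAt_comp_add_smul {y v g : E} {t : ℝ}
    (hf : HasGradientAt f g (y + t • v)) :
    HasDerivAt (fun s : ℝ => f (y + s • v)) ⟪g, v⟫_ℝ t := by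
  have hline : HasDerivAt (fun s : ℝ => y + s • v) v t :=
    ((hasDerivAt_id t).smul_const v).const_add y |>.congr_deriv (one_smul ℝ v)
  have := hf.hasFDerivAt.comp_hasDerivAt t hline
  rwa [toDual_apply_apply] at this

theorem IsLocalMin.gradient_eq_zero {a : E} (h : IsLocalMin f a) : gradient f a = 0 := by
  rw [gradient, h.fderiv_eq_zero, map_zero]

theorem le_add_inner_gradient_add_sq_of_lipschitz {L : ℝ} (hf : Differentiable ℝ f)
    (hLip : ∀ x y, ‖gradient f x - gradient f y‖ ≤ L * ‖x - y‖) (x y : E) :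
    f x ≤ f y + ⟪gradient f y, x - y⟫_ℝ + L / 2 * ‖x - y‖ ^ 2 := by
  set v := x - y
  set φ : ℝ → ℝ := fun t =>
    f (y + t • v) - t * ⟪gradient f y, v⟫_ℝ - L / 2 * ‖v‖ ^ 2 * t ^ 2
  have hφ : ∀ t,
      HasDerivAt φ (⟪gradient f (y + t • v) - gradient f y, v⟫_ℝ - L * ‖v‖ ^ 2 * t) t := by
    intro t
    have := ((hf (y + t • v)).hasGradientAt.hasDerivAt_comp_add_smul.sub
      ((hasDerivAt_id t).mul_const ⟪gradient f y, v⟫_ℝ)).sub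
      ((hasDerivAt_pow 2 t).const_mul (L / 2 * ‖v‖ ^ 2))
    refine this.congr_deriv ?_
    rw [inner_sub_left]; push_cast; ring
  have hφ'_nonpos : ∀ t ∈ interior (Icc (0 : ℝ) 1),
      ⟪gradient f (y + t • v) - gradient f y, v⟫_ℝ - L * ‖v‖ ^ 2 * t ≤ 0 := by
    intro t ht
    rw [interior_Icc] at ht
    have hstep : ‖y + t • v - y‖ = t * ‖v‖ := by
      rw [add_sub_cancel_left, norm_smul, Real.norm_of_nonneg ht.1.le]
    have := calc ⟪gradient f (y + t • v) - gradient f y, v⟫_ℝ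
        ≤ ‖gradient f (y + t • v) - gradient f y‖ * ‖v‖ := real_inner_le_norm _ _
      _ ≤ L * ‖y + t • v - y‖ * ‖v‖ := by gcongr; exact hLip _ _
      _ = L * ‖v‖ ^ 2 * t := by rw [hstep]; ring
    linarith
  have hanti : AntitoneOn φ (Icc 0 1) :=
    antitoneOn_of_hasDerivWithinAt_nonpos (convex_Icc 0 1)
      (HasDerivAt.continuousOn fun t _ => hφ t) (fun t _ => (hφ t).hasDerivWithinAt) hφ'_nonpos
  have := hanti (left_mem_Icc.mpr zero_le_one) (right_mem_Icc.mpr zero_le_one) zero_le_one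
  simp only [φ, zero_smul, add_zero, one_smul, add_sub_cancel, v] at this
  linarith

end Descent

theorem sub_le_half_mul_infDist_sq {E : Type*} [NormedAddCommGroup E] [InnerProductSpace ℝ E]
    [FiniteDimensional ℝ E] {f : E → ℝ} {L fstar : ℝ} (hf : Differentiable ℝ f)
    (hLip : ∀ x y, ‖gradient f x - gradient f y‖ ≤ L * ‖x - y‖)
    (hlb : ∀ x, fstar ≤ f x) (hatt : ∃ x, f x = fstar) (x : E) :
    f x - fstar ≤ L / 2 * infDist x {y | f y = fstar} ^ 2 := by
  obtain ⟨y, hy, hxy⟩ := (isClosed_eq hf.continuous continuous_const).exists_infDist_eq_dist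
    hatt x
  have hmin : IsLocalMin f y := IsMinOn.isLocalMin (fun z _ => hy ▸ hlb z) Filter.univ_mem
  have := le_add_inner_gradient_add_sq_of_lipschitz hf hLip x y
  rw [hmin.gradient_eq_zero, inner_zero_left, add_zero, hy] at this
  rw [hxy, dist_eq_norm]
  linarith

theorem error_bound_implies_pl {E : Type*} [NormedAddCommGroup E]
    [InnerProductSpace ℝ E] [FiniteDimensional ℝ E]
    (f : E → ℝ) (hf : Differentiable ℝ f) (L : ℝ) (hL : 0 < L)
    (hLip : ∀ x y, ‖gradient f x - gradient f y‖ ≤ L * ‖x - y‖)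
    (fstar : ℝ) (hlb : ∀ x, fstar ≤ f x) (hatt : ∃ x, f x = fstar)
    (μ : ℝ) (hμ : 0 < μ)
    (hEB : ∀ x, μ * Metric.infDist x {y | f y = fstar} ≤ ‖gradient f x‖) :
    ∀ x, 2 * (μ ^ 2 / L) * (f x - fstar) ≤ ‖gradient f x‖ ^ 2 := by
  intro x
  set d := infDist x {y | f y = fstar}
  have hgrowth := sub_le_half_mul_infDist_sq hf hLip hlb hatt x
  have hEB_sq : (μ * d) ^ 2 ≤ ‖gradient f x‖ ^ 2 :=
    pow_le_pow_left₀ (mul_nonneg hμ.le infDist_nonneg) (hEB x) 2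
  calc 2 * (μ ^ 2 / L) * (f x - fstar)
      ≤ 2 * (μ ^ 2 / L) * (L / 2 * d ^ 2) := by gcongr
    _ = (μ * d) ^ 2 := by field_simp
    _ ≤ ‖gradient f x‖ ^ 2 := hEB_sq
end

section
/- Let (Ω, 𝓕, ℙ) be a probability space, E and F finite-dimensional real inner product spaces, and h : E → F a C_h-Lipschitz map. Let a_prev, a ∈ E, ω ∈ F, and β ∈ (0, 1]. Let ξ : Ω → F be a square-integrable random vector with 𝔼[ξ] = h(a) and 𝔼[‖ξ - h(a)‖²] ≤ σ². Then the moving-average update ω' := (1 - β)ω + βξ satisfies 𝔼[‖ω' - h(a)‖²] ≤ (1 - β)‖ω - h(a_prev)‖² + (C_h²/β)‖a - a_prev‖² + 2β²σ². -/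
/-!
Write the update error as `(1 - β) • (ω - h a) + β • (ξ - h a)`. The noise term has mean zero,
so the cross term integrates away and the expected squared error is
`(1 - β)² ‖ω - h a‖² + β² 𝔼‖ξ - h a‖²`. The deterministic part is controlled by the triangle
inequality `‖ω - h a‖ ≤ ‖ω - h aprev‖ + ‖h aprev - h a‖` together with the convexity of the square,
which trades the drift `‖h aprev - h a‖ ≤ Ch ‖a - aprev‖` for a factor `1 / β`.
-/

open MeasureTheory

theorem integral_norm_add_sq_of_integral_eq_zero {Ω F : Type*} [MeasurableSpace Ω]
    {μ : Measure Ω} [IsProbabilityMeasure μ] [NormedAddCommGroup F] [InnerProductSpace ℝ F]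
    [CompleteSpace F] (c : F) {X : Ω → F} (hX : MemLp X 2 μ) (hX0 : ∫ s, X s ∂μ = 0) :
    ∫ s, ‖c + X s‖ ^ 2 ∂μ = ‖c‖ ^ 2 + ∫ s, ‖X s‖ ^ 2 ∂μ := by
  have hX1 : Integrable X μ := hX.integrable one_le_two
  have hX2 : Integrable (fun s => ‖X s‖ ^ 2) μ := hX.integrable_norm_pow two_ne_zero
  have hcross : ∫ s, inner ℝ c (X s) ∂μ = 0 := by rw [integral_inner hX1, hX0, inner_zero_right]
  simp_rw [norm_add_sq_real]
  have hcross_int : Integrable (fun s => 2 * inner ℝ c (X s)) μ := (hX1.const_inner c).const_mul 2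
  have hlin : Integrable (fun s => ‖c‖ ^ 2 + 2 * inner ℝ c (X s)) μ :=
    (integrable_const _).add hcross_int
  rw [integral_add hlin hX2, integral_add (integrable_const _) hcross_int, integral_const_mul,
    hcross, integral_const, probReal_univ]
  simp

theorem one_sub_sq_mul_add_sq_le {β : ℝ} (hβ : 0 < β) (hβ1 : β ≤ 1) (x d : ℝ) :
    (1 - β) ^ 2 * (x + d) ^ 2 ≤ (1 - β) * x ^ 2 + d ^ 2 / β := by
  rw [← sub_nonneg]
  have hrepr : (1 - β) * x ^ 2 + d ^ 2 / β - (1 - β) ^ 2 * (x + d) ^ 2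
      = (1 - β) * (β * x - (1 - β) * d) ^ 2 / β + (2 - β) * d ^ 2 := by
    field_simp
    ring
  rw [hrepr]
  have : 0 ≤ 1 - β := sub_nonneg.2 hβ1
  have : 0 ≤ 2 - β := by linarith
  positivity

theorem moving_average_error_recursion_general {Ω : Type*} [MeasureSpace Ω]
    [IsProbabilityMeasure (volume : Measure Ω)]
    {E F : Type*} [NormedAddCommGroup E] [InnerProductSpace ℝ E]
    [NormedAddCommGroup F] [InnerProductSpace ℝ F] [FiniteDimensional ℝ F]
    (h : E → F) (Ch : ℝ) (hLip : ∀ x y, ‖h x - h y‖ ≤ Ch * ‖x - y‖)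
    (aprev a : E) (ω : F) (β : ℝ) (hβ : 0 < β) (hβ1 : β ≤ 1)
    (ξ : Ω → F) (hξ : MemLp ξ 2) (hmean : (∫ s, ξ s) = h a)
    (σ : ℝ) (hvar : (∫ s, ‖ξ s - h a‖ ^ 2) ≤ σ ^ 2) :
    (∫ s, ‖((1 - β) • ω + β • ξ s) - h a‖ ^ 2)
      ≤ (1 - β) * ‖ω - h aprev‖ ^ 2 + Ch ^ 2 / β * ‖a - aprev‖ ^ 2
        + 2 * β ^ 2 * σ ^ 2 := by
  have hnoise : MemLp (fun s => β • (ξ s - h a)) 2 := (hξ.sub (memLp_const _)).const_smul β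
  have hnoise0 : ∫ s, β • (ξ s - h a) = 0 := by
    rw [integral_smul, integral_sub (hξ.integrable one_le_two) (integrable_const _), hmean,
      integral_const, probReal_univ, one_smul, sub_self, smul_zero]
  have hdrift : ‖h aprev - h a‖ ^ 2 ≤ Ch ^ 2 * ‖a - aprev‖ ^ 2 := by
    rw [← mul_pow, norm_sub_rev a]
    exact pow_le_pow_left₀ (norm_nonneg _) (hLip aprev a) 2
  have htri : ‖ω - h a‖ ^ 2 ≤ (‖ω - h aprev‖ + ‖h aprev - h a‖) ^ 2 :=
    pow_le_pow_left₀ (norm_nonneg _) (norm_sub_le_norm_sub_add_norm_sub ω (h aprev) (h a)) 2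
  have hσ : 0 ≤ σ ^ 2 := (integral_nonneg fun s => by positivity).trans hvar
  calc (∫ s, ‖((1 - β) • ω + β • ξ s) - h a‖ ^ 2)
      = ∫ s, ‖(1 - β) • (ω - h a) + β • (ξ s - h a)‖ ^ 2 := by
        congr with s
        congr 2
        module
    _ = (1 - β) ^ 2 * ‖ω - h a‖ ^ 2 + β ^ 2 * ∫ s, ‖ξ s - h a‖ ^ 2 := by
        rw [integral_norm_add_sq_of_integral_eq_zero _ hnoise hnoise0]
        simp only [norm_smul, mul_pow, Real.norm_eq_abs, sq_abs, integral_const_mul]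
    _ ≤ (1 - β) ^ 2 * (‖ω - h aprev‖ + ‖h aprev - h a‖) ^ 2 + β ^ 2 * σ ^ 2 := by gcongr
    _ ≤ (1 - β) * ‖ω - h aprev‖ ^ 2 + ‖h aprev - h a‖ ^ 2 / β + β ^ 2 * σ ^ 2 := by
        gcongr
        exact one_sub_sq_mul_add_sq_le hβ hβ1 _ _
    _ ≤ (1 - β) * ‖ω - h aprev‖ ^ 2 + Ch ^ 2 / β * ‖a - aprev‖ ^ 2 + 2 * β ^ 2 * σ ^ 2 := by
        rw [div_mul_eq_mul_div]
        gcongr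
        nlinarith [sq_nonneg β]

theorem moving_average_error_recursion {Ω : Type*} [MeasureSpace Ω]
    [IsProbabilityMeasure (volume : Measure Ω)]
    {E F : Type*} [NormedAddCommGroup E] [InnerProductSpace ℝ E] [FiniteDimensional ℝ E]
    [NormedAddCommGroup F] [InnerProductSpace ℝ F] [FiniteDimensional ℝ F]
    (h : E → F) (Ch : ℝ) (hLip : ∀ x y, ‖h x - h y‖ ≤ Ch * ‖x - y‖)
    (aprev a : E) (ω : F) (β : ℝ) (hβ : 0 < β) (hβ1 : β ≤ 1)
    (ξ : Ω → F) (hξ : MemLp ξ 2) (hmean : (∫ s, ξ s) = h a)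
    (σ : ℝ) (hvar : (∫ s, ‖ξ s - h a‖ ^ 2) ≤ σ ^ 2) :
    (∫ s, ‖((1 - β) • ω + β • ξ s) - h a‖ ^ 2)
      ≤ (1 - β) * ‖ω - h aprev‖ ^ 2 + Ch ^ 2 / β * ‖a - aprev‖ ^ 2
        + 2 * β ^ 2 * σ ^ 2 :=
  moving_average_error_recursion_general h Ch hLip aprev a ω β hβ hβ1 ξ hξ hmean σ hvar
end

section
/- Let (Ω, 𝓕, ℙ) be a probability space and E a finite-dimensional real inner product space. Let ψ : E → ℝ be differentiable with L-Lipschitz gradient (L > 0), bounded above with supremum P*, and satisfying the maximization μ-PL condition ‖∇ψ(a)‖² ≥ 2μ(P* - ψ(a)) for all a, with μ > 0. Let a ∈ E, let e ∈ E with ‖e‖ ≤ B, let 0 < γ ≤ 1/(4L), and let G : Ω → E be a square-integrable random vector with 𝔼[G] = ∇ψ(a) + e and 𝔼[‖G - 𝔼[G]‖²] ≤ V. Then 𝔼[P* - ψ(a + γG)] ≤ (1 - μγ/2)(P* - ψ(a)) + (3γ/4)B² + (Lγ²/2)V. -/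
/-!
Along a ray, `t ↦ ψ (x + t • v) - t * ⟪∇ψ x, v⟫ + L / 2 * t ^ 2 * ‖v‖ ^ 2` has nonnegative
derivative for `t ≥ 0`, because the gradient moves by at most `L t ‖v‖`; at `t = 1` this is the
lower quadratic bound of an `L`-smooth function. Applied at `a + γ • G` and integrated, with
`𝔼‖G‖² = 𝔼‖G - m‖² + ‖m‖²` for `m = 𝔼G = ∇ψ a + e`, it bounds the expected gap by
`(P* - ψ a) - γ ⟪∇ψ a, m⟫ + Lγ²/2 (𝔼‖G - m‖² + ‖m‖²)`. Polarization,
`⟪∇ψ a, m⟫ = (‖∇ψ a‖² + ‖m‖² - ‖e‖²) / 2`, together with `Lγ ≤ 1` absorbs the `‖m‖²` term and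
leaves `-(γ/2)‖∇ψ a‖² + (γ/2)‖e‖²`; the PL inequality turns half of the gradient term into
`-(μγ/2)(P* - ψ a)`.
-/

open MeasureTheory
open scoped RealInnerProductSpace

section

variable {Ω E : Type*} {mΩ : MeasurableSpace Ω} {μ : Measure Ω} [IsProbabilityMeasure μ]
  [NormedAddCommGroup E] [InnerProductSpace ℝ E] [CompleteSpace E] {ψ : E → ℝ} {L P : ℝ}

lemma DifferentiableAt.hasDerivAt_comp_add_smul {x v : E} {t : ℝ}
    (hψ : DifferentiableAt ℝ ψ (x + t • v)) :
    HasDerivAt (fun t : ℝ => ψ (x + t • v)) ⟪gradient ψ (x + t • v), v⟫ t := by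
  have hline : HasDerivAt (fun t : ℝ => x + t • v) v t := by
    simpa using ((hasDerivAt_id t).smul_const v).const_add x
  rw [← hψ.hasGradientAt.fderiv_apply]
  exact hψ.hasFDerivAt.comp_hasDerivAt t hline

theorem add_inner_gradient_sub_sq_le_of_lipschitz_gradient (hψ : Differentiable ℝ ψ)
    (hLip : ∀ x y, ‖gradient ψ x - gradient ψ y‖ ≤ L * ‖x - y‖) (x y : E) :
    ψ x + ⟪gradient ψ x, y - x⟫ - L / 2 * ‖y - x‖ ^ 2 ≤ ψ y := by
  set v := y - x
  let φ : ℝ → ℝ := fun t => ψ (x + t • v) - t * ⟪gradient ψ x, v⟫ + L / 2 * t ^ 2 * ‖v‖ ^ 2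
  have hφ : ∀ t, HasDerivAt φ
      (⟪gradient ψ (x + t • v), v⟫ - ⟪gradient ψ x, v⟫ + L * t * ‖v‖ ^ 2) t := by
    intro t
    refine ((((hψ _).hasDerivAt_comp_add_smul.sub ((hasDerivAt_id t).mul_const
      ⟪gradient ψ x, v⟫)).add (((hasDerivAt_pow 2 t).const_mul (L / 2)).mul_const
      (‖v‖ ^ 2)))).congr_deriv ?_
    ring
  have hmono : MonotoneOn φ (Set.Ici 0) := by
    refine monotoneOn_of_hasDerivWithinAt_nonneg (convex_Ici 0)
      (fun t _ => (hφ t).continuousAt.continuousWithinAt) (fun t _ => (hφ t).hasDerivWithinAt) ?_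
    intro t ht
    rw [interior_Ici, Set.mem_Ioi] at ht
    have hdiff : ‖gradient ψ (x + t • v) - gradient ψ x‖ ≤ L * t * ‖v‖ := by
      simpa [norm_smul, abs_of_pos ht, mul_assoc] using hLip (x + t • v) x
    have hinner := real_inner_le_norm (gradient ψ x - gradient ψ (x + t • v)) v
    rw [norm_sub_rev, inner_sub_left] at hinner
    linarith [mul_le_mul_of_nonneg_right hdiff (norm_nonneg v)]
  have h01 : φ 0 ≤ φ 1 := hmono Set.self_mem_Ici (Set.mem_Ici.2 zero_le_one) zero_le_one
  simp only [φ, v, zero_smul, one_smul, add_zero, add_sub_cancel] at h01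
  linarith

lemma integral_norm_sq_eq_integral_norm_sub_integral_sq_add {X : Ω → E} (hX : MemLp X 2 μ) :
    ∫ ω, ‖X ω‖ ^ 2 ∂μ = ∫ ω, ‖X ω - ∫ ω', X ω' ∂μ‖ ^ 2 ∂μ + ‖∫ ω, X ω ∂μ‖ ^ 2 := by
  set m := ∫ ω, X ω ∂μ
  have hXint : Integrable X μ := hX.integrable one_le_two
  have hpoint : ∀ ω, ‖X ω‖ ^ 2 = ‖X ω - m‖ ^ 2 + (2 * ⟪m, X ω⟫ - ‖m‖ ^ 2) := by
    intro ω
    rw [← sub_add_cancel (X ω) m, norm_add_sq_real, add_sub_cancel_right, inner_add_right,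
      real_inner_self_eq_norm_sq, real_inner_comm]
    ring
  have hdev : Integrable (fun ω => ‖X ω - m‖ ^ 2) μ :=
    (hX.sub (memLp_const m)).integrable_norm_pow two_ne_zero
  have hlin : Integrable (fun ω => 2 * ⟪m, X ω⟫ - ‖m‖ ^ 2) μ :=
    ((hXint.const_inner m).const_mul 2).sub (integrable_const _)
  simp_rw [hpoint]
  rw [integral_add hdev hlin, integral_sub ((hXint.const_inner m).const_mul 2) (integrable_const _),
    integral_const_mul, integral_inner hXint, real_inner_self_eq_norm_sq]
  simp only [integral_const, probReal_univ, one_smul]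
  ring

theorem integral_sub_comp_add_smul_le_of_lipschitz_gradient (hψ : Differentiable ℝ ψ)
    (hLip : ∀ x y, ‖gradient ψ x - gradient ψ y‖ ≤ L * ‖x - y‖) (hP : ∀ x, ψ x ≤ P)
    (a : E) (γ : ℝ) {G : Ω → E} (hG : MemLp G 2 μ) :
    ∫ ω, (P - ψ (a + γ • G ω)) ∂μ ≤
      (P - ψ a) - γ * ⟪gradient ψ a, ∫ ω, G ω ∂μ⟫ + L * γ ^ 2 / 2 * ∫ ω, ‖G ω‖ ^ 2 ∂μ := by
  have hGint : Integrable G μ := hG.integrable one_le_two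
  have hpoint : ∀ ω, P - ψ (a + γ • G ω) ≤
      (P - ψ a) - γ * ⟪gradient ψ a, G ω⟫ + L * γ ^ 2 / 2 * ‖G ω‖ ^ 2 := by
    intro ω
    have := add_inner_gradient_sub_sq_le_of_lipschitz_gradient hψ hLip a (a + γ • G ω)
    rw [add_sub_cancel_left, real_inner_smul_right, norm_smul, mul_pow, Real.norm_eq_abs,
      sq_abs] at this
    linarith
  have hlin : Integrable (fun ω => γ * ⟪gradient ψ a, G ω⟫) μ :=
    (hGint.const_inner _).const_mul γ
  have hsq : Integrable (fun ω => L * γ ^ 2 / 2 * ‖G ω‖ ^ 2) μ :=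
    (hG.integrable_norm_pow two_ne_zero).const_mul _
  have hdrift : Integrable (fun ω => (P - ψ a) - γ * ⟪gradient ψ a, G ω⟫) μ :=
    (integrable_const _).sub hlin
  have hquad : Integrable
      (fun ω => (P - ψ a) - γ * ⟪gradient ψ a, G ω⟫ + L * γ ^ 2 / 2 * ‖G ω‖ ^ 2) μ :=
    hdrift.add hsq
  have hcont : Continuous fun x : E => P - ψ (a + γ • x) := by
    have := hψ.continuous
    fun_prop
  have hgap : Integrable (fun ω => P - ψ (a + γ • G ω)) μ :=
    hquad.mono' (hcont.comp_aestronglyMeasurable hG.aestronglyMeasurable) <|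
      .of_forall fun ω => by
        rw [Real.norm_of_nonneg (sub_nonneg.2 (hP _))]
        exact hpoint ω
  refine (integral_mono hgap hquad hpoint).trans_eq ?_
  rw [integral_add hdrift hsq, integral_sub (integrable_const _) hlin,
    integral_const_mul, integral_const_mul, integral_inner hGint]
  simp only [integral_const, probReal_univ, one_smul]

theorem integral_sub_comp_add_smul_le_of_integral_eq_gradient_add (hψ : Differentiable ℝ ψ)
    (hLip : ∀ x y, ‖gradient ψ x - gradient ψ y‖ ≤ L * ‖x - y‖) (hP : ∀ x, ψ x ≤ P)
    {a e : E} {γ : ℝ} (hγ : 0 ≤ γ) (hLγ : L * γ ≤ 1) {G : Ω → E}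
    (hG : MemLp G 2 μ) (hmean : ∫ ω, G ω ∂μ = gradient ψ a + e) :
    ∫ ω, (P - ψ (a + γ • G ω)) ∂μ ≤ (P - ψ a) - γ / 2 * ‖gradient ψ a‖ ^ 2 + γ / 2 * ‖e‖ ^ 2
      + L * γ ^ 2 / 2 * ∫ ω, ‖G ω - ∫ ω', G ω' ∂μ‖ ^ 2 ∂μ := by
  have hstep := integral_sub_comp_add_smul_le_of_lipschitz_gradient hψ hLip hP a γ hG
  rw [integral_norm_sq_eq_integral_norm_sub_integral_sq_add hG] at hstep
  set m := ∫ ω, G ω ∂μ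
  have hpolar : ⟪gradient ψ a, m⟫ = (‖gradient ψ a‖ ^ 2 + ‖m‖ ^ 2 - ‖e‖ ^ 2) / 2 := by
    rw [real_inner_eq_norm_mul_self_add_norm_mul_self_sub_norm_sub_mul_self_div_two, norm_sub_rev,
      hmean, add_sub_cancel_left]
    ring
  have hm : L * γ ^ 2 / 2 * ‖m‖ ^ 2 ≤ γ / 2 * ‖m‖ ^ 2 := by
    gcongr
    nlinarith [mul_le_mul_of_nonneg_left hLγ hγ]
  rw [hpolar] at hstep
  linarith

end

theorem one_step_biased_ascent_general {Ω : Type*} [MeasureSpace Ω]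
    [IsProbabilityMeasure (volume : Measure Ω)]
    {E : Type*} [NormedAddCommGroup E] [InnerProductSpace ℝ E] [FiniteDimensional ℝ E]
    (ψ : E → ℝ) (hψ : Differentiable ℝ ψ) (L : ℝ) (hL : 0 < L)
    (hLip : ∀ x y, ‖gradient ψ x - gradient ψ y‖ ≤ L * ‖x - y‖)
    (Pstar : ℝ) (hPstar : IsLUB (Set.range ψ) Pstar)
    (μ : ℝ)
    (hPL : ∀ a, 2 * μ * (Pstar - ψ a) ≤ ‖gradient ψ a‖ ^ 2)
    (a : E) (e : E) (B : ℝ) (he : ‖e‖ ≤ B)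
    (γ : ℝ) (hγ : 0 < γ) (hγ' : γ ≤ 1 / (4 * L))
    (G : Ω → E) (hG : MemLp G 2)
    (hmean : (∫ s, G s) = gradient ψ a + e)
    (V : ℝ) (hvar : (∫ s, ‖G s - ∫ t, G t‖ ^ 2) ≤ V) :
    (∫ s, (Pstar - ψ (a + γ • G s))) ≤
      (1 - μ * γ / 2) * (Pstar - ψ a) + 3 * γ / 4 * B ^ 2 + L * γ ^ 2 / 2 * V := by
  have hLγ : L * γ ≤ 1 / 4 := by
    rw [le_div_iff₀ (by positivity)] at hγ'
    linarith
  have hstep := integral_sub_comp_add_smul_le_of_integral_eq_gradient_add hψ hLip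
    (fun x => hPstar.1 ⟨x, rfl⟩) hγ.le (by linarith) hG hmean
  have hPL' : γ * (2 * μ * (Pstar - ψ a)) ≤ γ * ‖gradient ψ a‖ ^ 2 :=
    mul_le_mul_of_nonneg_left (hPL a) hγ.le
  have hB : γ * ‖e‖ ^ 2 ≤ γ * B ^ 2 := by gcongr
  have hV : L * γ ^ 2 / 2 * ∫ s, ‖G s - ∫ t, G t‖ ^ 2 ≤ L * γ ^ 2 / 2 * V := by gcongr
  linarith [mul_nonneg hγ.le (sq_nonneg ‖gradient ψ a‖), mul_nonneg hγ.le (sq_nonneg ‖e‖)]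

theorem one_step_biased_ascent {Ω : Type*} [MeasureSpace Ω]
    [IsProbabilityMeasure (volume : Measure Ω)]
    {E : Type*} [NormedAddCommGroup E] [InnerProductSpace ℝ E] [FiniteDimensional ℝ E]
    (ψ : E → ℝ) (hψ : Differentiable ℝ ψ) (L : ℝ) (hL : 0 < L)
    (hLip : ∀ x y, ‖gradient ψ x - gradient ψ y‖ ≤ L * ‖x - y‖)
    (Pstar : ℝ) (hPstar : IsLUB (Set.range ψ) Pstar)
    (μ : ℝ) (hμ : 0 < μ)
    (hPL : ∀ a, 2 * μ * (Pstar - ψ a) ≤ ‖gradient ψ a‖ ^ 2)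
    (a : E) (e : E) (B : ℝ) (he : ‖e‖ ≤ B)
    (γ : ℝ) (hγ : 0 < γ) (hγ' : γ ≤ 1 / (4 * L))
    (G : Ω → E) (hG : MemLp G 2)
    (hmean : (∫ s, G s) = gradient ψ a + e)
    (V : ℝ) (hvar : (∫ s, ‖G s - ∫ t, G t‖ ^ 2) ≤ V) :
    (∫ s, (Pstar - ψ (a + γ • G s))) ≤
      (1 - μ * γ / 2) * (Pstar - ψ a) + 3 * γ / 4 * B ^ 2 + L * γ ^ 2 / 2 * V :=
  one_step_biased_ascent_general ψ hψ L hL hLip Pstar hPstar μ hPL a e B he γ hγ hγ' G hG hmean V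
    hvar
end
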